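/- arXiv:2105.02222 — 4 statements merged into one kernel-verified Lean document; each statement's English description precedes it below -/
import Mathlib

section
/- Let S be an M×(M+1) real matrix, b ∈ ℝ^{M+1}, and let N_b be the square matrix obtained by appending bᵀ as last row. If v ∈ ker S, then for every column index j, det(N_b) · v_j = (-1)^{M+1+j} ⟨b, v⟩ · det(S_{∖j}), where S_{∖j} is S with column j removed. -/
/-!
Since `S v = 0`, the vector `N_b v` is `⟨b, v⟩ e_last`. Multiplying by the adjugate gives
`det N_b • v = ⟨b, v⟩ • (last column of adj N_b)`, and the entries of that column are the signed
minors of `N_b` obtained by deleting its last row, i.e. the signed maximal minors of `S`.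
-/

open Matrix

namespace Matrix

variable {R : Type*} [CommRing R]

theorem det_smul_eq_adjugate_mulVec_mulVec {n : Type*} [Fintype n] [DecidableEq n]
    (A : Matrix n n R) (v : n → R) : A.det • v = A.adjugate *ᵥ (A *ᵥ v) := by
  rw [mulVec_mulVec, adjugate_mul, smul_mulVec, one_mulVec]

theorem det_mul_apply_of_mulVec_eq_single {n : Type*} [Fintype n] [DecidableEq n]
    {A : Matrix n n R} {v : n → R} {i : n} {c : R} (h : A *ᵥ v = Pi.single i c) (j : n) :
    A.det * v j = A.adjugate j i * c := by
  simpa [h, mulVec_single] using congrFun (det_smul_eq_adjugate_mulVec_mulVec A v) j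

theorem of_snoc_mulVec {M : ℕ} {n : Type*} [Fintype n] (S : Matrix (Fin M) n R) (b v : n → R) :
    of (Fin.snoc S b) *ᵥ v = Fin.snoc (S *ᵥ v) (b ⬝ᵥ v) := by
  ext i
  refine Fin.lastCases ?_ (fun i => ?_) i <;> simp [mulVec, Fin.snoc]

theorem of_snoc_mulVec_of_mulVec_eq_zero {M : ℕ} {n : Type*} [Fintype n]
    {S : Matrix (Fin M) n R} {v : n → R} (hv : S *ᵥ v = 0) (b : n → R) :
    of (Fin.snoc S b) *ᵥ v = Pi.single (Fin.last M) (b ⬝ᵥ v) := by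
  rw [of_snoc_mulVec, hv]
  ext i
  refine Fin.lastCases ?_ (fun i => ?_) i <;> simp

theorem adjugate_of_snoc_apply_last {M : ℕ} (S : Matrix (Fin M) (Fin (M + 1)) R)
    (b : Fin (M + 1) → R) (j : Fin (M + 1)) :
    adjugate (of (Fin.snoc S b)) j (Fin.last M) =
      (-1) ^ (M + (j : ℕ)) * (S.submatrix id j.succAbove).det := by
  rw [adjugate_fin_succ_eq_det_submatrix, Fin.val_last, Fin.succAbove_last]
  congr 2
  ext i k
  simp [Fin.snoc]

end Matrix

/-- Cramer-type identity: for v ∈ ker S and N_b the matrix S with appended row bᵀ,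
det(N_b) · v_j = ±⟨b,v⟩ · det(S with column j removed). -/
theorem stmt4 (M : ℕ) (S : Matrix (Fin M) (Fin (M + 1)) ℝ)
    (v b : Fin (M + 1) → ℝ) (hv : S.mulVec v = 0)
    (Nb : Matrix (Fin (M + 1)) (Fin (M + 1)) ℝ)
    (hNb : Nb = Matrix.of (Fin.snoc S b)) :
    ∀ j : Fin (M + 1),
      Nb.det * v j = (-1 : ℝ) ^ (M + (j : ℕ)) * (b ⬝ᵥ v) * (S.submatrix id j.succAbove).det := by
  intro j
  subst hNb
  rw [det_mul_apply_of_mulVec_eq_single (of_snoc_mulVec_of_mulVec_eq_zero hv b),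
    adjugate_of_snoc_apply_last]
  ring
end

section
/- Let A be an M×M real matrix with dim ker A = 1. Then there exist vectors v, κ ∈ ℝ^M with ker A = span⟨v⟩, coker A (i.e. ker Aᵀ) = span⟨κ⟩, such that the adjugate matrix satisfies Ad(A) = v · κᵀ. -/
/-!
Since `A * adj A = adj A * A = 0`, the columns of `adj A` lie in `ker A = span {v}`, so
`adj A = v κᵀ`, and then `v (κᵀ A) = 0` puts `κ` in `ker Aᵀ`, which is one-dimensional as well
because `rank Aᵀ = rank A`. It remains to see `adj A ≠ 0`: if `vᵢ ≠ 0` and `b ∉ range A`, then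
replacing the `i`-th column of `A` by `b` gives an invertible matrix, and by Cramer's rule its
determinant is `(adj A * b)ᵢ`.
-/

open Matrix Module

theorem Matrix.updateCol_mulVec {m n R : Type*} [Fintype n] [DecidableEq n] [CommSemiring R]
    (A : Matrix m n R) (i : n) (b : m → R) (x : n → R) :
    A.updateCol i b *ᵥ x = A *ᵥ Function.update x i 0 + x i • b := by
  ext k
  simp [mulVec, dotProduct, updateCol_apply, Function.update_apply, mul_ite, Finset.sum_ite,
    Finset.filter_eq', Finset.filter_ne', add_comm, mul_comm]

theorem Matrix.exists_eq_vecMulVec_of_forall_col_mem_span {m n K : Type*} [Field K]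
    {B : Matrix m n K} {w : m → K} (h : ∀ j, Bᵀ j ∈ K ∙ w) : ∃ κ, B = vecMulVec w κ := by
  choose κ hκ using fun j => Submodule.mem_span_singleton.mp (h j)
  refine ⟨κ, ?_⟩
  ext i j
  simpa [vecMulVec_apply, mul_comm] using (congrFun (hκ j) i).symm

theorem Submodule.exists_eq_span_singleton_of_finrank_eq_one {K V : Type*} [DivisionRing K]
    [AddCommGroup V] [Module K V] {S : Submodule K V} (hS : finrank K S = 1) :
    ∃ w ≠ 0, S = K ∙ w := by
  have : Module.Finite K S := Module.finite_of_finrank_pos (by omega)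
  obtain ⟨w, hwS, hw0⟩ := Submodule.exists_mem_ne_zero_of_ne_bot
    (Submodule.one_le_finrank_iff.mp hS.ge)
  exact ⟨w, hw0, eq_span_singleton_of_mem_of_finrank_eq_one hS hwS hw0⟩

namespace Matrix

variable {K n : Type*} [Field K] [Fintype n] (A : Matrix n n K)

theorem finrank_ker_mulVecLin_transpose :
    finrank K (LinearMap.ker Aᵀ.mulVecLin) = finrank K (LinearMap.ker A.mulVecLin) := by
  have hA := LinearMap.finrank_range_add_finrank_ker A.mulVecLin
  have hAt := LinearMap.finrank_range_add_finrank_ker Aᵀ.mulVecLin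
  have hrank : Aᵀ.rank = A.rank := rank_transpose A
  rw [rank, rank] at hrank
  omega

variable [DecidableEq n]

theorem det_eq_zero_of_ker_ne_bot (h : LinearMap.ker A.mulVecLin ≠ ⊥) : A.det = 0 := by
  obtain ⟨w, hw, hw0⟩ := Submodule.exists_mem_ne_zero_of_ne_bot h
  exact exists_mulVec_eq_zero_iff.mp ⟨w, hw0, hw⟩

theorem mulVec_transpose_adjugate_eq_zero (hA : A.det = 0) (j : n) :
    A *ᵥ A.adjugateᵀ j = 0 := by
  have h : A * A.adjugate = 0 := by rw [mul_adjugate, hA, zero_smul]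
  ext i
  exact congrFun (congrFun h i) j

theorem mulVec_transpose_eq_zero_of_adjugate_eq_vecMulVec (hA : A.det = 0) {w κ : n → K}
    (hw : w ≠ 0) (hadj : A.adjugate = vecMulVec w κ) : Aᵀ *ᵥ κ = 0 := by
  have h : vecMulVec w (κ ᵥ* A) = 0 := by
    rw [← vecMulVec_mul, ← hadj, adjugate_mul, hA, zero_smul]
  rw [mulVec_transpose]
  exact (vecMulVec_eq_zero.mp h).resolve_left hw

theorem det_updateCol_ne_zero {w : n → K} (hker : LinearMap.ker A.mulVecLin = K ∙ w) {i : n}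
    (hwi : w i ≠ 0) {b : n → K} (hb : b ∉ LinearMap.range A.mulVecLin) :
    (A.updateCol i b).det ≠ 0 := by
  intro h0
  obtain ⟨x, hx0, hx⟩ := exists_mulVec_eq_zero_iff.mpr h0
  rw [updateCol_mulVec] at hx
  by_cases hxi : x i = 0
  · have hxker : x ∈ LinearMap.ker A.mulVecLin := by
      rwa [Function.update_eq_self_iff.mpr hxi.symm, hxi, zero_smul, add_zero] at hx
    obtain ⟨t, rfl⟩ := Submodule.mem_span_singleton.mp (hker ▸ hxker)
    have ht : t = 0 := by simpa [hwi] using hxi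
    exact hx0 (by simp [ht])
  · refine hb ⟨-(x i)⁻¹ • Function.update x i 0, ?_⟩
    rw [mulVecLin_apply, mulVec_smul, eq_neg_of_add_eq_zero_left hx]
    simp [smul_smul, hxi]

theorem adjugate_ne_zero_of_finrank_ker_eq_one
    (hA : finrank K (LinearMap.ker A.mulVecLin) = 1) : A.adjugate ≠ 0 := by
  obtain ⟨w, hw0, hker⟩ := Submodule.exists_eq_span_singleton_of_finrank_eq_one hA
  obtain ⟨i, hwi⟩ := Function.ne_iff.mp hw0
  obtain ⟨b, hb⟩ : ∃ b, b ∉ LinearMap.range A.mulVecLin := by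
    by_contra! h
    have : LinearMap.ker A.mulVecLin = ⊥ :=
      LinearMap.ker_eq_bot_iff_range_eq_top.mpr (Submodule.eq_top_iff'.mpr h)
    rw [this, finrank_bot] at hA
    exact zero_ne_one hA
  intro hadj
  apply A.det_updateCol_ne_zero hker hwi hb
  rw [← cramer_apply, cramer_eq_adjugate_mulVec, hadj, zero_mulVec, Pi.zero_apply]

end Matrix

/-- If A is a square real matrix with one-dimensional kernel, there are vectors v
spanning ker A and κ spanning ker Aᵀ with Ad(A) = v·κᵀ. -/
theorem stmt6 (M : ℕ) (A : Matrix (Fin M) (Fin M) ℝ)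
    (hdim : Module.finrank ℝ (LinearMap.ker A.mulVecLin) = 1) :
    ∃ v κ : Fin M → ℝ,
      v ≠ 0 ∧ LinearMap.ker A.mulVecLin = Submodule.span ℝ {v} ∧
      κ ≠ 0 ∧ LinearMap.ker A.transpose.mulVecLin = Submodule.span ℝ {κ} ∧
      A.adjugate = Matrix.vecMulVec v κ := by
  obtain ⟨v, hv0, hker⟩ := Submodule.exists_eq_span_singleton_of_finrank_eq_one hdim
  have hdet : A.det = 0 := A.det_eq_zero_of_ker_ne_bot (by simp [hker, hv0])
  obtain ⟨κ, hadj⟩ : ∃ κ, A.adjugate = vecMulVec v κ :=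
    exists_eq_vecMulVec_of_forall_col_mem_span fun j => by
      rw [← hker]
      exact A.mulVec_transpose_adjugate_eq_zero hdet j
  have hκ0 : κ ≠ 0 := by
    rintro rfl
    exact A.adjugate_ne_zero_of_finrank_ker_eq_one hdim (by simp [hadj])
  have hκker : κ ∈ LinearMap.ker Aᵀ.mulVecLin :=
    A.mulVec_transpose_eq_zero_of_adjugate_eq_vecMulVec hdet hv0 hadj
  refine ⟨v, κ, hv0, hker, hκ0, ?_, hadj⟩
  exact eq_span_singleton_of_mem_of_finrank_eq_one
    (by rw [finrank_ker_mulVecLin_transpose, hdim]) hκker hκ0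
end

section
/- Let S = [A | c] be an M×(M+1) real matrix with dim ker S = 1, where A is the first M columns with det A = 0 and one-dimensional kernel spanned by ṽ. Let κ span ker Aᵀ with Ad(A) = ṽ·κᵀ. Then for each j ≤ M, replacing column j of A by c gives det(A[j→c]) = ṽ_j ⟨κ, c⟩; moreover ⟨κ, c⟩ ≠ 0. -/
/-!
By Cramer's rule, `det A[j→c]` is the `j`-th entry of `Ad(A) c = ṽ ⟨κ, c⟩`. If `⟨κ, c⟩ = 0`, then
`κ` annihilates every column of `S = [A | c]`; but by rank–nullity `S` has rank `M`, so its rows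
are linearly independent and `κ = 0`.
-/

open Matrix

theorem LinearMap.surjective_of_finrank_ker_add_finrank_eq {K V W : Type*} [Field K]
    [AddCommGroup V] [Module K V] [FiniteDimensional K V] [AddCommGroup W] [Module K W]
    [FiniteDimensional K W] (f : V →ₗ[K] W)
    (h : Module.finrank K (LinearMap.ker f) + Module.finrank K W = Module.finrank K V) :
    Function.Surjective f := by
  rw [← LinearMap.range_eq_top]
  apply Submodule.eq_top_of_finrank_eq
  have := LinearMap.finrank_range_add_finrank_ker f
  omega

namespace Matrix

theorem det_updateCol_eq_of_adjugate_eq_vecMulVec {n R : Type*} [Fintype n] [DecidableEq n]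
    [CommRing R] {A : Matrix n n R} {v w : n → R} (h : A.adjugate = vecMulVec v w)
    (c : n → R) (j : n) : (A.updateCol j c).det = v j * (w ⬝ᵥ c) := by
  rw [← cramer_apply, cramer_eq_adjugate_mulVec, h, vecMulVec_mulVec]
  simp

theorem vecMul_of_snoc {m R : Type*} [Fintype m] [Semiring R] {n : ℕ}
    (A : Matrix m (Fin n) R) (c : m → R) (x : m → R) :
    x ᵥ* of (fun i => Fin.snoc (A i) (c i)) = Fin.snoc (x ᵥ* A) (x ⬝ᵥ c) := by
  funext j
  refine Fin.lastCases ?_ (fun _ => ?_) j <;> simp [vecMul, dotProduct]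

theorem vecMul_injective_of_mulVec_surjective {m n R : Type*} [Fintype m] [DecidableEq m]
    [Fintype n] [Semiring R] {S : Matrix m n R} (hS : Function.Surjective S.mulVec) :
    Function.Injective S.vecMul := by
  obtain ⟨B, hSB⟩ := mulVec_surjective_iff_exists_right_inverse.mp hS
  intro x y hxy
  simpa [vecMul_vecMul, hSB] using congrArg (· ᵥ* B) hxy

end Matrix

theorem stmt15_general (M : ℕ) (A : Matrix (Fin M) (Fin M) ℝ) (c : Fin M → ℝ)
    (S : Matrix (Fin M) (Fin (M + 1)) ℝ)
    (hS : S = Matrix.of fun i => Fin.snoc (A i) (c i))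
    (hdimS : Module.finrank ℝ (LinearMap.ker S.mulVecLin) = 1)
    (vt κ : Fin M → ℝ) (hκ : κ ≠ 0)
    (hkerκ : LinearMap.ker A.transpose.mulVecLin = Submodule.span ℝ {κ})
    (hadj : A.adjugate = Matrix.vecMulVec vt κ) :
    (∀ j : Fin M, (A.updateCol j c).det = vt j * (κ ⬝ᵥ c)) ∧ κ ⬝ᵥ c ≠ 0 := by
  refine ⟨det_updateCol_eq_of_adjugate_eq_vecMulVec hadj c, fun hκc => hκ ?_⟩
  have hκA : κ ᵥ* A = 0 := by
    have : κ ∈ LinearMap.ker A.transpose.mulVecLin := hkerκ ▸ Submodule.mem_span_singleton_self κ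
    simpa [mulVec_transpose] using this
  have hκS : κ ᵥ* S = 0 := by
    rw [hS, vecMul_of_snoc, hκA, hκc]
    ext j
    refine Fin.lastCases ?_ (fun _ => ?_) j <;> simp
  have hSsurj : Function.Surjective S.mulVec :=
    S.mulVecLin.surjective_of_finrank_ker_add_finrank_eq (by simp [hdimS, add_comm])
  exact vecMul_injective_of_mulVec_surjective hSsurj (hκS.trans (zero_vecMul S).symm)

/-- For S = [A|c] with one-dimensional kernel, det A = 0, ker A spanned by ṽ, and κ
spanning ker Aᵀ normalized so Ad(A) = ṽ·κᵀ: det(A[j→c]) = ṽ_j⟨κ,c⟩ and ⟨κ,c⟩ ≠ 0. -/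
theorem stmt15 (M : ℕ) (A : Matrix (Fin M) (Fin M) ℝ) (c : Fin M → ℝ)
    (S : Matrix (Fin M) (Fin (M + 1)) ℝ)
    (hS : S = Matrix.of fun i => Fin.snoc (A i) (c i))
    (hdimS : Module.finrank ℝ (LinearMap.ker S.mulVecLin) = 1)
    (hdet : A.det = 0)
    (vt κ : Fin M → ℝ) (hvt : vt ≠ 0) (hκ : κ ≠ 0)
    (hkerv : LinearMap.ker A.mulVecLin = Submodule.span ℝ {vt})
    (hkerκ : LinearMap.ker A.transpose.mulVecLin = Submodule.span ℝ {κ})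
    (hadj : A.adjugate = Matrix.vecMulVec vt κ) :
    (∀ j : Fin M, (A.updateCol j c).det = vt j * (κ ⬝ᵥ c)) ∧ κ ⬝ᵥ c ≠ 0 :=
  stmt15_general M A c S hS hdimS vt κ hκ hkerκ hadj
end

section
/- Let A be an M×M real matrix, c ∈ ℝ^M, v ∈ ℝ^M and κ ∈ ℝ^M with Av = 0, Aᵀκ = 0, Ad(A) = v·κᵀ, and fix an index i with κ_i ≠ 0. Let N be the (M+1)×(M+1) matrix with block form [[Aᵀ, e_{j'}],[cᵀ, 0]] for a unit vector e_{j'}. Then det(N) · κ_i = (-1)^{i+j'+1} ⟨c, κ⟩ · det(A^{∨j'}_{∨i}), where A^{∨j'}_{∨i} is A with column j' and row i removed. -/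
/-!
Expanding a bordered determinant along its last column and then along its last row gives
`det [[A, u], [cᵀ, 0]] = -cᵀ adj(A) u`. For `N` this is `-cᵀ adj(Aᵀ) e_{j'} = -v_{j'} ⟨c, κ⟩`,
since `adj(Aᵀ) = adj(A)ᵀ = κ vᵀ`; and `v_{j'} κ_i = adj(A)_{j' i}` is, up to the sign
`(-1)^(i+j')`, the minor of `A` without row `i` and column `j'`.
-/

open Matrix

namespace Matrix

/-- The block matrix `[[A, u], [cᵀ, d]]`. -/
def border {α : Type*} {n : ℕ} (A : Matrix (Fin n) (Fin n) α) (u c : Fin n → α) (d : α) :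
    Matrix (Fin (n + 1)) (Fin (n + 1)) α :=
  of (Fin.snoc (fun r => Fin.snoc (A r) (u r)) (Fin.snoc c d))

section border

variable {α : Type*} {n : ℕ} (A : Matrix (Fin n) (Fin n) α) (u c : Fin n → α) (d : α)

@[simp] lemma border_castSucc_castSucc (r s : Fin n) :
    border A u c d r.castSucc s.castSucc = A r s := by
  simp [border]

@[simp] lemma border_castSucc_last (r : Fin n) :
    border A u c d r.castSucc (Fin.last n) = u r := by
  simp [border]

@[simp] lemma border_last_castSucc (s : Fin n) :
    border A u c d (Fin.last n) s.castSucc = c s := by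
  simp [border]

@[simp] lemma border_last_last : border A u c d (Fin.last n) (Fin.last n) = d := by
  simp [border]

end border

variable {R : Type*} [CommRing R] {n : ℕ}

lemma det_border_submatrix_castSucc (A : Matrix (Fin (n + 1)) (Fin (n + 1)) R)
    (u c : Fin (n + 1) → R) (d : R) (k : Fin (n + 1)) :
    ((border A u c d).submatrix k.castSucc.succAbove Fin.castSucc).det =
      (-1) ^ (n + k : ℕ) * (c ᵥ* A.adjugate) k := by
  rw [det_succ_row _ (Fin.last n), vecMul, dotProduct, Finset.mul_sum]
  refine Finset.sum_congr rfl fun q _ => ?_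
  have hlast : k.castSucc.succAbove (Fin.last n) = Fin.last (n + 1) := by
    rw [Fin.succAbove_castSucc_of_le _ _ (Fin.le_last k), Fin.succ_last]
  have hminor : ((border A u c d).submatrix k.castSucc.succAbove Fin.castSucc).submatrix
      (Fin.last n).succAbove q.succAbove = A.submatrix k.succAbove q.succAbove := by
    ext r s
    simp [Fin.succAbove_last, Fin.castSucc_succAbove_castSucc]
  rw [submatrix_apply, hlast, border_last_castSucc, hminor,
    adjugate_fin_succ_eq_det_submatrix, Fin.val_last]
  have hsign : ((-1 : R) ^ (n + q : ℕ)) = (-1) ^ (n + k : ℕ) * (-1) ^ (k + q : ℕ) := by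
    rw [← pow_add, show n + k + (k + q : ℕ) = n + q + 2 * k by ring, pow_add _ (n + q : ℕ),
      pow_mul]
    simp
  rw [hsign]
  ring

theorem det_border_zero (A : Matrix (Fin (n + 1)) (Fin (n + 1)) R) (u c : Fin (n + 1) → R) :
    (border A u c 0).det = -(c ⬝ᵥ A.adjugate *ᵥ u) := by
  rw [det_succ_column _ (Fin.last _), Fin.sum_univ_castSucc, border_last_last, mul_zero,
    zero_mul, add_zero, dotProduct_mulVec, dotProduct, ← Finset.sum_neg_distrib]
  refine Finset.sum_congr rfl fun k _ => ?_
  have hsign : ((-1 : R) ^ (k.castSucc + Fin.last (n + 1) : ℕ)) * (-1) ^ (n + k : ℕ) = -1 := by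
    rw [← pow_add]
    exact Odd.neg_one_pow ⟨n + k, by simp; ring⟩
  rw [border_castSucc_last, Fin.succAbove_last, det_border_submatrix_castSucc]
  linear_combination (u k * (c ᵥ* A.adjugate) k) * hsign

end Matrix

theorem stmt17_general (M : ℕ) (A : Matrix (Fin (M + 1)) (Fin (M + 1)) ℝ)
    (v κ c : Fin (M + 1) → ℝ)
    (hadj : A.adjugate = Matrix.vecMulVec v κ)
    (i : Fin (M + 1)) (j' : Fin (M + 1))
    (N : Matrix (Fin (M + 2)) (Fin (M + 2)) ℝ)
    (hN : N = Matrix.of (Fin.snoc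
      (fun r => Fin.snoc (A.transpose r) ((Pi.single j' 1 : Fin (M + 1) → ℝ) r))
      (Fin.snoc c 0))) :
    N.det * κ i =
      (-1 : ℝ) ^ ((i : ℕ) + (j' : ℕ) + 1) * (c ⬝ᵥ κ) *
        (A.submatrix i.succAbove j'.succAbove).det := by
  have hdet : N.det = -(v j' * (c ⬝ᵥ κ)) := by
    rw [show N = border Aᵀ (Pi.single j' 1) c 0 from hN, det_border_zero,
      ← adjugate_transpose, hadj, transpose_vecMulVec, dotProduct_mulVec, vecMul_vecMulVec,
      dotProduct_comm c κ, smul_dotProduct, dotProduct_single, mul_one, smul_eq_mul, mul_comm]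
  have hcofactor : v j' * κ i = (-1) ^ ((i : ℕ) + (j' : ℕ)) *
      (A.submatrix i.succAbove j'.succAbove).det := by
    rw [← vecMulVec_apply, ← hadj, adjugate_fin_succ_eq_det_submatrix]
  rw [hdet, pow_succ]
  linear_combination (-(c ⬝ᵥ κ)) * hcofactor

/-- Cramer-type identity for the cokernel: with Av = 0, Aᵀκ = 0, Ad(A) = v·κᵀ, κ_i ≠ 0,
and N the block matrix [[Aᵀ, e_{j'}],[cᵀ, 0]]:
det(N)·κ_i = (-1)^{i+j'+1}⟨c,κ⟩·det(A with row i and column j' removed). -/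
theorem stmt17 (M : ℕ) (A : Matrix (Fin (M + 1)) (Fin (M + 1)) ℝ)
    (v κ c : Fin (M + 1) → ℝ)
    (hv : A.mulVec v = 0) (hκ : A.transpose.mulVec κ = 0)
    (hadj : A.adjugate = Matrix.vecMulVec v κ)
    (i : Fin (M + 1)) (hi : κ i ≠ 0) (j' : Fin (M + 1))
    (N : Matrix (Fin (M + 2)) (Fin (M + 2)) ℝ)
    (hN : N = Matrix.of (Fin.snoc
      (fun r => Fin.snoc (A.transpose r) ((Pi.single j' 1 : Fin (M + 1) → ℝ) r))
      (Fin.snoc c 0))) :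
    N.det * κ i =
      (-1 : ℝ) ^ ((i : ℕ) + (j' : ℕ) + 1) * (c ⬝ᵥ κ) *
        (A.submatrix i.succAbove j'.succAbove).det :=
  stmt17_general M A v κ c hadj i j' N hN
end
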